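/- Let n ≥ 2, let k ≥ 1, let p_1, …, p_{k+1} ∈ ℂ, and let 𝓛_1, …, 𝓛_k be superoperators on n×n complex matrices with Tr 𝓛_j(X) = 0 for all X and all j. Then 𝔓(Λ_{p_1} ∘ 𝓛_1 ∘ Λ_{p_2} ∘ 𝓛_2 ∘ ⋯ ∘ Λ_{p_k} ∘ 𝓛_k ∘ Λ_{p_{k+1}}) = Λ_{p_1 p_2 ⋯ p_{k+1}} ∘ 𝔓(𝓛_1 ∘ 𝓛_2 ∘ ⋯ ∘ 𝓛_k). -/

import Mathlib

open Matrix

/-- The superoperator `X ↦ (Tr X) • I` on `n × n` complex matrices. -/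
noncomputable def traceMap (n : ℕ) :
    Matrix (Fin n) (Fin n) ℂ →ₗ[ℂ] Matrix (Fin n) (Fin n) ℂ :=
  (LinearMap.toSpanSingleton ℂ _ (1 : Matrix (Fin n) (Fin n) ℂ)).comp
    (Matrix.traceLinearMap (Fin n) ℂ ℂ)

/-- The depolarizing superoperator `Λ_p : X ↦ p • X + (1 - p) • (Tr X / n) • I`. -/
noncomputable def depol (n : ℕ) (p : ℂ) :
    Matrix (Fin n) (Fin n) ℂ →ₗ[ℂ] Matrix (Fin n) (Fin n) ℂ :=
  p • LinearMap.id + ((1 - p) / (n : ℂ)) • traceMap n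

/-- The superoperator trace `tr Φ = Σ_{k,m} (Φ E_{km})_{km}`. -/
noncomputable def supertrace (n : ℕ)
    (Φ : Matrix (Fin n) (Fin n) ℂ →ₗ[ℂ] Matrix (Fin n) (Fin n) ℂ) : ℂ :=
  ∑ k : Fin n, ∑ m : Fin n, (Φ (Matrix.single k m 1)) k m

/-- The twirling hyperprojector with respect to the full unitary group. -/
noncomputable def twirl (n : ℕ)
    (Φ : Matrix (Fin n) (Fin n) ℂ →ₗ[ℂ] Matrix (Fin n) (Fin n) ℂ) :
    Matrix (Fin n) (Fin n) ℂ →ₗ[ℂ] Matrix (Fin n) (Fin n) ℂ :=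
  ((((n : ℂ) * Matrix.trace (Φ 1) - supertrace n Φ) / ((n : ℂ) * ((n : ℂ) ^ 2 - 1))) •
      traceMap n) +
    ((((n : ℂ) * supertrace n Φ - Matrix.trace (Φ 1)) / ((n : ℂ) * ((n : ℂ) ^ 2 - 1))) •
      LinearMap.id)

lemma traceMap_apply (n : ℕ) (X : Matrix (Fin n) (Fin n) ℂ) :
    traceMap n X = X.trace • 1 := rfl

lemma depol_apply (n : ℕ) (q : ℂ) (X : Matrix (Fin n) (Fin n) ℂ) :
    depol n q X = q • X + ((1 - q) / (n : ℂ)) • X.trace • 1 := rfl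

lemma depol_mul_traceless (n : ℕ) (q : ℂ)
    (L : Matrix (Fin n) (Fin n) ℂ →ₗ[ℂ] Matrix (Fin n) (Fin n) ℂ)
    (h : ∀ X, (L X).trace = 0) : depol n q * L = q • L := by
  ext X
  simp [Module.End.mul_apply, depol_apply, h]

lemma prod_ofFn_smul : ∀ (k : ℕ) {n : ℕ} (c : Fin k → ℂ)
    (A : Fin k → (Matrix (Fin n) (Fin n) ℂ →ₗ[ℂ] Matrix (Fin n) (Fin n) ℂ)),
    (List.ofFn fun j => c j • A j).prod = (∏ j, c j) • (List.ofFn A).prod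
  | 0, n, c, A => by simp
  | (m+1), n, c, A => by
    rw [List.ofFn_succ, List.ofFn_succ, List.prod_cons, List.prod_cons,
      prod_ofFn_smul m _ _, Fin.prod_univ_succ, smul_mul_assoc, mul_smul_comm, smul_smul]

lemma supertrace_add (n : ℕ) (Φ Ψ : Matrix (Fin n) (Fin n) ℂ →ₗ[ℂ] Matrix (Fin n) (Fin n) ℂ) :
    supertrace n (Φ + Ψ) = supertrace n Φ + supertrace n Ψ := by
  simp [supertrace, Finset.sum_add_distrib]

lemma supertrace_smul (n : ℕ) (a : ℂ)
    (Φ : Matrix (Fin n) (Fin n) ℂ →ₗ[ℂ] Matrix (Fin n) (Fin n) ℂ) :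
    supertrace n (a • Φ) = a * supertrace n Φ := by
  simp [supertrace, Finset.mul_sum]

lemma supertrace_comp_traceMap (n : ℕ)
    (L : Matrix (Fin n) (Fin n) ℂ →ₗ[ℂ] Matrix (Fin n) (Fin n) ℂ) :
    supertrace n (L * traceMap n) = (L 1).trace := by
  have h : ∀ k m : Fin n, (Matrix.single k m (1:ℂ)).trace = if k = m then 1 else 0 := by
    intro k m
    by_cases h : k = m
    · simp [h]
    · simp [Matrix.trace_single_eq_of_ne _ _ _ h, h]
  simp only [supertrace, Module.End.mul_apply, traceMap_apply, _root_.map_smul,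
    Matrix.smul_apply, smul_eq_mul, h, ite_mul, one_mul, zero_mul, Matrix.smul_apply]
  simp [Matrix.trace, Matrix.diag]

/-- For trace-annihilating `𝓛_1, …, 𝓛_k`,
`𝔓(Λ_{p_1}𝓛_1Λ_{p_2}𝓛_2⋯Λ_{p_k}𝓛_kΛ_{p_{k+1}}) = Λ_{p_1⋯p_{k+1}}𝔓(𝓛_1⋯𝓛_k)`.
Here multiplication in `Module.End` is composition, with earlier list entries acting last. -/
theorem twirl_alternating_depol_traceless (n : ℕ) (hn : 2 ≤ n) (k : ℕ) (hk : 1 ≤ k)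
    (p : Fin (k + 1) → ℂ)
    (𝓛 : Fin k → (Matrix (Fin n) (Fin n) ℂ →ₗ[ℂ] Matrix (Fin n) (Fin n) ℂ))
    (h𝓛 : ∀ j, ∀ X, Matrix.trace (𝓛 j X) = 0) :
    twirl n ((List.ofFn fun j : Fin k => depol n (p j.castSucc) * 𝓛 j).prod *
        depol n (p (Fin.last k))) =
      depol n (∏ i, p i) * twirl n (List.ofFn 𝓛).prod := by
  obtain _ | m := k
  · omega
  set L := (List.ofFn 𝓛).prod with hLdef
  have hL : ∀ X, (L X).trace = 0 := by
    intro X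
    rw [hLdef, List.ofFn_succ, List.prod_cons]
    exact h𝓛 0 _
  have h1 : (L 1).trace = 0 := hL 1
  have hlist : (List.ofFn fun j : Fin (m+1) => depol n (p j.castSucc) * 𝓛 j) =
      List.ofFn fun j => (p j.castSucc) • 𝓛 j := by
    congr 1; funext j; exact depol_mul_traceless n _ _ (h𝓛 j)
  rw [hlist, prod_ofFn_smul, ← hLdef]
  set c := ∏ j : Fin (m+1), p j.castSucc with hc
  set q := p (Fin.last (m+1)) with hq
  have hP : (∏ i, p i) = c * q := by
    rw [hc, hq, Fin.prod_univ_castSucc]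
  have hexp : L * depol n q = (q • L) + (((1-q)/(n:ℂ)) • (L * traceMap n)) := by
    refine LinearMap.ext fun X => ?_
    simp [depol_apply, traceMap_apply, Module.End.mul_apply, map_add, _root_.map_smul]
  rw [smul_mul_assoc, hexp, smul_add, smul_smul, smul_smul, hP]
  have htrT1 : ((L * traceMap n) 1).trace = 0 := by
    simp [Module.End.mul_apply, traceMap_apply, hL]
  have hst : supertrace n ((c * q) • L + (c * ((1-q)/(n:ℂ))) • (L * traceMap n)) =
      (c * q) * supertrace n L := by
    rw [supertrace_add, supertrace_smul, supertrace_smul, supertrace_comp_traceMap, h1]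
    ring
  have htr1 : ((((c * q) • L + (c * ((1-q)/(n:ℂ))) • (L * traceMap n))) 1).trace = 0 := by
    simp only [LinearMap.add_apply, LinearMap.smul_apply, Matrix.trace_add,
      Matrix.trace_smul, smul_eq_mul, h1, htrT1, mul_zero, add_zero]
  rw [twirl, twirl, hst, htr1, h1]
  refine LinearMap.ext fun X => ?_
  simp only [LinearMap.add_apply, LinearMap.smul_apply, LinearMap.id_apply,
    Module.End.mul_apply, traceMap_apply, depol_apply, Matrix.trace_add, Matrix.trace_smul,
    Matrix.trace_one, Fintype.card_fin, smul_eq_mul, Matrix.smul_apply]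
  match_scalars <;> ring
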